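/- Let O_N be a square-integrable random variable such that E[O_N · Σ_{k=0}^{N−1} φ_k·ΔM_k] = 0 for every admissible ℍ-predictable process φ, and set O_n := E[O_N | F_n] for n ≤ N. Then for every n ≤ N and every admissible ℍ-predictable process φ, E[(O_N − O_n) · Σ_{k=n}^{N−1} φ_k·ΔM_k | H_n] = 0 P-almost surely. -/

import Mathlib

/-!
Let `S = ∑_{n ≤ k < N} φ_k ΔM_k`. For `s ∈ H_n`, the process `k ↦ 1_s 1_{k ≥ n} φ_k` is again
admissible and `ℍ`-predictable, and the hypothesis applied to it says `∫_s O_N S = 0`, i.e.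
`E[O_N S | H_n] = 0`. On the other hand `S` is a sum of martingale increments weighted by
`F_k`-measurable factors with `k ≥ n`, so `E[S | F_n] = 0`; since `O_n` is `F_n`-measurable and
`H_n ⊆ F_n`, the tower property gives `E[O_n S | H_n] = E[O_n E[S | F_n] | H_n] = 0`.
-/

open MeasureTheory Filter
open scoped ENNReal

section ConditionalExpectation

variable {Ω : Type*} {mΩ : MeasurableSpace Ω} {μ : Measure Ω}

lemma condExp_ae_eq_zero_of_forall_setIntegral_eq_zero {E : Type*} [NormedAddCommGroup E]
    [NormedSpace ℝ E] [CompleteSpace E] {m : MeasurableSpace Ω} (hm : m ≤ mΩ)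
    [SigmaFinite (μ.trim hm)] {f : Ω → E} (hf : Integrable f μ)
    (hf0 : ∀ s, MeasurableSet[m] s → ∫ x in s, f x ∂μ = 0) :
    μ[f | m] =ᵐ[μ] 0 :=
  (ae_eq_condExp_of_forall_setIntegral_eq hm hf (fun _ _ _ => integrableOn_zero)
    (fun s hs _ => by simp [hf0 s hs]) aestronglyMeasurable_zero).symm

lemma condExp_mul_ae_eq_zero_of_condExp_ae_eq_zero [IsFiniteMeasure μ]
    {m' m : MeasurableSpace Ω} (hm' : m' ≤ m) (hm : m ≤ mΩ) {f g : Ω → ℝ}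
    (hf : StronglyMeasurable[m] f) (hfg : Integrable (f * g) μ) (hg : Integrable g μ)
    (hg0 : μ[g | m] =ᵐ[μ] 0) :
    μ[f * g | m'] =ᵐ[μ] 0 := by
  have hfg0 : μ[f * g | m] =ᵐ[μ] 0 := by
    filter_upwards [condExp_mul_of_stronglyMeasurable_left hf hfg hg, hg0] with ω hω hω0
    simp [hω, hω0]
  calc μ[f * g | m'] =ᵐ[μ] μ[μ[f * g | m] | m'] := (condExp_condExp_of_le hm' hm).symm
    _ =ᵐ[μ] μ[0 | m'] := condExp_congr_ae hfg0
    _ = 0 := condExp_zero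

end ConditionalExpectation

namespace MeasureTheory.Martingale

variable {Ω : Type*} {mΩ : MeasurableSpace Ω} {μ : Measure Ω}
  {ℱ : Filtration ℕ mΩ} {M : ℕ → Ω → ℝ}

lemma condExp_sub_ae_eq_zero (hM : Martingale M ℱ μ) (k : ℕ) :
    μ[fun ω => M (k + 1) ω - M k ω | ℱ k] =ᵐ[μ] 0 := by
  change μ[M (k + 1) - M k | ℱ k] =ᵐ[μ] 0
  filter_upwards [condExp_sub (hM.integrable (k + 1)) (hM.integrable k) (ℱ k),
    hM.condExp_ae_eq k.le_succ, hM.condExp_ae_eq (le_refl k)] with ω hω hω₁ hω₀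
  simp [hω, hω₁, hω₀]

lemma condExp_mul_sub_ae_eq_zero [IsFiniteMeasure μ] (hM : Martingale M ℱ μ) {n k : ℕ}
    (hnk : n ≤ k) {φ : Ω → ℝ} (hφ : StronglyMeasurable[ℱ k] φ)
    (hφM : Integrable (fun ω => φ ω * (M (k + 1) ω - M k ω)) μ) :
    μ[fun ω => φ ω * (M (k + 1) ω - M k ω) | ℱ n] =ᵐ[μ] 0 :=
  condExp_mul_ae_eq_zero_of_condExp_ae_eq_zero (ℱ.mono hnk) (ℱ.le k) hφ hφM
    ((hM.integrable (k + 1)).sub (hM.integrable k)) (hM.condExp_sub_ae_eq_zero k)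

lemma condExp_sum_mul_sub_ae_eq_zero [IsFiniteMeasure μ] (hM : Martingale M ℱ μ)
    {φ : ℕ → Ω → ℝ} (hφ : ∀ k, StronglyMeasurable[ℱ k] (φ k))
    (hφM : ∀ k, Integrable (fun ω => φ k ω * (M (k + 1) ω - M k ω)) μ) (n N : ℕ) :
    μ[fun ω => ∑ k ∈ Finset.Ico n N, φ k ω * (M (k + 1) ω - M k ω) | ℱ n] =ᵐ[μ] 0 := by
  have hterms : ∀ᵐ ω ∂μ, ∀ k ∈ Finset.Ico n N,
      μ[fun ω => φ k ω * (M (k + 1) ω - M k ω) | ℱ n] ω = 0 :=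
    (eventually_all_finset _).2 fun k hk =>
      hM.condExp_mul_sub_ae_eq_zero (Finset.mem_Ico.1 hk).1 (hφ k) (hφM k)
  filter_upwards [condExp_finsetSum (s := Finset.Ico n N) (fun k _ => hφM k) (ℱ n), hterms]
    with ω hsum hterms
  simp only [Finset.sum_fn, Finset.sum_apply] at hsum
  rw [hsum, Finset.sum_eq_zero hterms, Pi.zero_apply]

end MeasureTheory.Martingale

lemma Finset.sum_range_ite_le_eq_sum_Ico {M : Type*} [AddCommMonoid M] (f : ℕ → M) (n N : ℕ) :
    ∑ k ∈ Finset.range N, (if n ≤ k then f k else 0) = ∑ k ∈ Finset.Ico n N, f k := by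
  rw [Finset.sum_ite, Finset.sum_const_zero, add_zero]
  congr 1
  ext k
  simp [and_comm]

lemma setIntegral_mul_sum_mul_sub_eq_zero {Ω : Type*} {mΩ : MeasurableSpace Ω}
    {P : Measure Ω} {ℍ : Filtration ℕ mΩ} {M : ℕ → Ω → ℝ} {O : Ω → ℝ}
    {p : ℝ≥0∞} {N : ℕ}
    (horth : ∀ φ : ℕ → Ω → ℝ, (∀ k, StronglyMeasurable[ℍ k] (φ k)) →
      (∀ k, MemLp (fun ω => φ k ω * (M (k + 1) ω - M k ω)) p P) →
      ∫ ω, O ω * ∑ k ∈ Finset.range N, φ k ω * (M (k + 1) ω - M k ω) ∂P = 0)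
    {n : ℕ} {φ : ℕ → Ω → ℝ} (hφ : ∀ k, StronglyMeasurable[ℍ k] (φ k))
    (hφM : ∀ k, MemLp (fun ω => φ k ω * (M (k + 1) ω - M k ω)) p P)
    {s : Set Ω} (hs : MeasurableSet[ℍ n] s) :
    ∫ ω in s, O ω * ∑ k ∈ Finset.Ico n N, φ k ω * (M (k + 1) ω - M k ω) ∂P = 0 := by
  let ψ : ℕ → Ω → ℝ := fun k ω => if n ≤ k then s.indicator (φ k) ω else 0
  have hψ : ∀ k, StronglyMeasurable[ℍ k] (ψ k) := by
    intro k
    by_cases hk : n ≤ k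
    · simpa [ψ, hk] using (hφ k).indicator (ℍ.mono hk s hs)
    · simpa [ψ, hk] using stronglyMeasurable_const
  have hψM : ∀ k, MemLp (fun ω => ψ k ω * (M (k + 1) ω - M k ω)) p P := by
    intro k
    by_cases hk : n ≤ k
    · convert (hφM k).indicator (ℍ.le n s hs) using 1
      ext ω
      simp [ψ, hk, Set.indicator_mul_left]
    · simp [ψ, hk]
  have hψsum : ∀ ω, O ω * ∑ k ∈ Finset.range N, ψ k ω * (M (k + 1) ω - M k ω) =
      s.indicator (fun ω => O ω * ∑ k ∈ Finset.Ico n N, φ k ω * (M (k + 1) ω - M k ω)) ω := by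
    intro ω
    by_cases hω : ω ∈ s
    · have hψω : ∀ k, ψ k ω * (M (k + 1) ω - M k ω) =
          if n ≤ k then φ k ω * (M (k + 1) ω - M k ω) else 0 := by
        intro k
        split_ifs <;> simp [ψ, *]
      simp only [hψω, Finset.sum_range_ite_le_eq_sum_Ico, Set.indicator_of_mem hω]
    · simp [ψ, hω]
  rw [← integral_indicator (ℍ.le n s hs), ← horth ψ hψ hψM]
  simp_rw [hψsum]

theorem stmt_14 {Ω : Type*} {mΩ : MeasurableSpace Ω} {P : Measure Ω} [IsProbabilityMeasure P]
    (N : ℕ) (𝔽 ℍ : Filtration ℕ mΩ) (hle : ∀ k, ℍ k ≤ 𝔽 k)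
    (M : ℕ → Ω → ℝ) (hM : Martingale M 𝔽 P)
    (ON : Ω → ℝ) (hON : MemLp ON 2 P)
    (horth : ∀ φ : ℕ → Ω → ℝ, (∀ k, StronglyMeasurable[ℍ k] (φ k)) →
      (∀ k, MemLp (fun ω => φ k ω * (M (k + 1) ω - M k ω)) 2 P) →
      ∫ ω, ON ω * ∑ k ∈ Finset.range N, φ k ω * (M (k + 1) ω - M k ω) ∂P = 0) :
    ∀ n ≤ N, ∀ φ : ℕ → Ω → ℝ, (∀ k, StronglyMeasurable[ℍ k] (φ k)) →
      (∀ k, MemLp (fun ω => φ k ω * (M (k + 1) ω - M k ω)) 2 P) →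
      P[fun ω => (ON ω - (P[ON | 𝔽 n]) ω) *
          ∑ k ∈ Finset.Ico n N, φ k ω * (M (k + 1) ω - M k ω) | ℍ n] =ᵐ[P] 0 := by
  intro n _ φ hφ hφM
  set S : Ω → ℝ := fun ω => ∑ k ∈ Finset.Ico n N, φ k ω * (M (k + 1) ω - M k ω)
  have hS : MemLp S 2 P := memLp_finsetSum _ fun k _ => hφM k
  have hO_S : P[ON * S | ℍ n] =ᵐ[P] 0 :=
    condExp_ae_eq_zero_of_forall_setIntegral_eq_zero (ℍ.le n) (hON.integrable_mul hS)
      fun s hs => setIntegral_mul_sum_mul_sub_eq_zero horth hφ hφM hs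
  have hOn_S : P[P[ON | 𝔽 n] * S | ℍ n] =ᵐ[P] 0 :=
    condExp_mul_ae_eq_zero_of_condExp_ae_eq_zero (hle n) (𝔽.le n) stronglyMeasurable_condExp
      ((hON.condExp one_le_two).integrable_mul hS) (hS.integrable one_le_two)
      (hM.condExp_sum_mul_sub_ae_eq_zero (fun k => (hφ k).mono (hle k))
        (fun k => (hφM k).integrable one_le_two) n N)
  calc P[fun ω => (ON ω - P[ON | 𝔽 n] ω) * S ω | ℍ n]
      = P[ON * S - P[ON | 𝔽 n] * S | ℍ n] := by simp only [sub_mul]; rfl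
    _ =ᵐ[P] P[ON * S | ℍ n] - P[P[ON | 𝔽 n] * S | ℍ n] :=
      condExp_sub (hON.integrable_mul hS) ((hON.condExp one_le_two).integrable_mul hS) _
    _ =ᵐ[P] 0 := by
      filter_upwards [hO_S, hOn_S] with ω h₁ h₂
      simp [h₁, h₂]
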